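/- arXiv:2006.02191 — 4 statements merged into one kernel-verified Lean document; each statement's English description precedes it below -/
import Mathlib

section
/- Let F be an automorphism of a probability space (M, m) and A : M → ℝ a square-integrable observable with zero mean, whose correlations ρ_n = ∫ A(x)·A(F^n x) dm satisfy Σ_{n≥0} n·|ρ_n| < ∞. Then the sequence ‖Σ_{n=0}^{N-1} A∘F^n‖_{L²} is bounded in N if and only if Σ² := Σ_{n=-∞}^{∞} ρ_n equals 0 (where ρ_{-n} = ρ_n). -/
/-!
By invariance the correlations of `A ∘ F^i` and `A ∘ F^j` depend only on `j - i`, so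
`‖Σ_{n<N} A ∘ F^n‖² = N ρ₀ + 2 Σ_{k<N} (N - k - 1) ρ_{k+1}`. Subtracting this from `N Σ²` leaves
`2 Σ_k min(N, k + 1) ρ_{k+1}`, which is bounded by `2 Σ_n n |ρ_n|`. Hence
`‖Σ_{n<N} A ∘ F^n‖² = N Σ² + O(1)`, which is bounded exactly when `Σ² = 0`.
-/

open MeasureTheory Finset

lemma Finset.sum_range_sum_range_of_stationary {R : Type*} [CommRing R] (G : ℕ → ℕ → R)
    (ρ : ℕ → R) (hG : ∀ i k, G i (i + k) = ρ k) (hsymm : ∀ i j, G i j = G j i) (N : ℕ) :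
    ∑ i ∈ range N, ∑ j ∈ range N, G i j
      = N * ρ 0 + 2 * ∑ k ∈ range N, ((N - (k + 1) : ℕ) : R) * ρ (k + 1) := by
  induction N with
  | zero => simp
  | succ N ih =>
    have hcol : ∑ i ∈ range N, G i N = ∑ k ∈ range N, ρ (k + 1) := by
      rw [← sum_range_reflect]
      refine sum_congr rfl fun k hk => ?_
      rw [← hG (N - 1 - k) (k + 1)]
      congr 1
      have := mem_range.mp hk
      omega
    have hweight : ∀ k ∈ range N, ((N + 1 - (k + 1) : ℕ) : R) * ρ (k + 1)
        = ((N - (k + 1) : ℕ) : R) * ρ (k + 1) + ρ (k + 1) := by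
      intro k hk
      rw [show N + 1 - (k + 1) = N - (k + 1) + 1 by have := mem_range.mp hk; omega]
      push_cast
      ring
    have hL : ∑ i ∈ range (N + 1), ∑ j ∈ range (N + 1), G i j
        = ∑ i ∈ range N, ∑ j ∈ range N, G i j + 2 * ∑ k ∈ range N, ρ (k + 1) + ρ 0 := by
      simp only [sum_range_succ, sum_add_distrib]
      rw [sum_congr rfl fun i _ => hsymm N i, hcol, ← hG N 0, add_zero]
      ring
    rw [hL, ih, sum_range_succ, Nat.sub_self, sum_congr rfl hweight, sum_add_distrib]
    push_cast
    ring

namespace MeasureTheory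

variable {α : Type*} [MeasurableSpace α] {μ : Measure α}

lemma MemLp.toReal_eLpNorm_two_eq_sqrt {f : α → ℝ} (hf : MemLp f 2 μ) :
    (eLpNorm f 2 μ).toReal = √(∫ x, f x ^ 2 ∂μ) := by
  rw [hf.eLpNorm_eq_integral_rpow_norm two_ne_zero ENNReal.ofNat_ne_top,
    ENNReal.toReal_ofReal (by positivity), Real.sqrt_eq_rpow]
  simp

lemma integral_finsetSum_sq {ι : Type*} {s : Finset ι} {f : ι → α → ℝ}
    (hf : ∀ i ∈ s, MemLp (f i) 2 μ) :
    ∫ x, (∑ i ∈ s, f i x) ^ 2 ∂μ = ∑ i ∈ s, ∑ j ∈ s, ∫ x, f i x * f j x ∂μ := by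
  have hprod : ∀ i ∈ s, ∀ j ∈ s, Integrable (fun x => f i x * f j x) μ :=
    fun i hi j hj => (hf i hi).integrable_mul (hf j hj)
  simp_rw [sq, sum_mul_sum]
  rw [integral_finsetSum s fun i hi => integrable_finsetSum s (hprod i hi)]
  exact sum_congr rfl fun i hi => integral_finsetSum s (hprod i hi)

noncomputable def autocorrelation (μ : Measure α) (f : α → α) (A : α → ℝ) (k : ℕ) : ℝ :=
  ∫ x, A x * A (f^[k] x) ∂μ

lemma MeasurePreserving.integral_comp_iterate_mul_comp_iterate_add {f : α → α}
    (hf : MeasurePreserving f μ μ) {A : α → ℝ} (hA : AEStronglyMeasurable A μ) (i k : ℕ) :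
    ∫ x, A (f^[i] x) * A (f^[i + k] x) ∂μ = autocorrelation μ f A k := by
  have hfi := hf.iterate i
  have hmeas : AEStronglyMeasurable (fun y => A y * A (f^[k] y)) (μ.map f^[i]) := by
    rw [hfi.map_eq]
    exact hA.mul (hA.comp_measurePreserving (hf.iterate k))
  simp_rw [add_comm i k, Function.iterate_add_apply]
  rw [← integral_map hfi.aemeasurable hmeas, hfi.map_eq, autocorrelation]

lemma MeasurePreserving.integral_birkhoffSum_sq {f : α → α} (hf : MeasurePreserving f μ μ)
    {A : α → ℝ} (hA : MemLp A 2 μ) (N : ℕ) :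
    ∫ x, birkhoffSum f A N x ^ 2 ∂μ = N * autocorrelation μ f A 0
      + 2 * ∑ k ∈ range N, ((N - (k + 1) : ℕ) : ℝ) * autocorrelation μ f A (k + 1) := by
  rw [← sum_range_sum_range_of_stationary (fun i j => ∫ x, A (f^[i] x) * A (f^[j] x) ∂μ)]
  · exact integral_finsetSum_sq fun n _ => hA.comp_measurePreserving (hf.iterate n)
  · exact hf.integral_comp_iterate_mul_comp_iterate_add hA.aestronglyMeasurable
  · exact fun i j => by simp_rw [mul_comm]

end MeasureTheory

lemma abs_mul_tsum_sub_sum_range_le {r : ℕ → ℝ}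
    (hr : Summable fun k : ℕ => ((k : ℝ) + 1) * |r k|) (N : ℕ) :
    |N * ∑' k, r k - ∑ k ∈ range N, ((N - (k + 1) : ℕ) : ℝ) * r k|
      ≤ ∑' k : ℕ, ((k : ℝ) + 1) * |r k| := by
  have hr_summable : Summable r := hr.of_norm_bounded fun k =>
    le_mul_of_one_le_left (abs_nonneg _) (le_add_of_nonneg_left k.cast_nonneg)
  have hmin : ∀ k : ℕ, ‖((min N (k + 1) : ℕ) : ℝ) * r k‖ ≤ ((k : ℝ) + 1) * |r k| := fun k => by
    rw [norm_mul, Real.norm_natCast, Real.norm_eq_abs]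
    gcongr
    exact_mod_cast min_le_right N (k + 1)
  have hzero : ∀ k ∉ range N, ((N - (k + 1) : ℕ) : ℝ) * r k = 0 := fun k hk => by
    rw [mem_range, not_lt] at hk
    simp [Nat.sub_eq_zero_of_le (Nat.le_succ_of_le hk)]
  have hsplit : N * ∑' k, r k - ∑' k : ℕ, ((N - (k + 1) : ℕ) : ℝ) * r k
      = ∑' k : ℕ, ((min N (k + 1) : ℕ) : ℝ) * r k := by
    rw [← tsum_mul_left, ← (hr_summable.mul_left _).tsum_sub (summable_of_ne_finset_zero hzero)]
    congr 1 with k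
    have hN : ((N - (k + 1) : ℕ) : ℝ) + (min N (k + 1) : ℕ) = N := by
      exact_mod_cast Nat.sub_add_min_cancel N (k + 1)
    rw [← sub_mul, ← hN, add_sub_cancel_left]
  rw [← tsum_eq_sum (L := .unconditional ℕ) hzero, hsplit, ← Real.norm_eq_abs]
  exact tsum_of_norm_bounded hr.hasSum hmin

lemma Real.exists_forall_sqrt_le_iff {ι : Type*} (u : ι → ℝ) :
    (∃ C, ∀ i, √(u i) ≤ C) ↔ ∃ C, ∀ i, u i ≤ C :=
  ⟨fun ⟨C, hC⟩ => ⟨C ^ 2, fun i => (Real.sqrt_le_iff.mp (hC i)).2⟩,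
    fun ⟨C, hC⟩ => ⟨√C, fun i => Real.sqrt_le_sqrt (hC i)⟩⟩

lemma exists_forall_le_iff_eq_zero_of_abs_sub_nat_mul_le {B : ℕ → ℝ} {x c : ℝ}
    (hB : ∀ N, 0 ≤ B N) (h : ∀ N : ℕ, |B N - N * x| ≤ c) : (∃ C, ∀ N, B N ≤ C) ↔ x = 0 := by
  constructor
  · rintro ⟨C, hC⟩
    by_contra hx
    obtain ⟨N, hN⟩ := exists_nat_gt ((C + c) / |x|)
    have hNx : N * |x| ≤ C + c := by
      have := abs_sub_abs_le_abs_sub (N * x) (B N)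
      rw [abs_sub_comm, abs_mul, Nat.abs_cast, abs_of_nonneg (hB N)] at this
      linarith [h N, hC N]
    rw [div_lt_iff₀ (abs_pos.mpr hx)] at hN
    linarith
  · rintro rfl
    exact ⟨c, fun N => by simpa using (abs_le.mp (h N)).2⟩

theorem bounded_birkhoff_L2_iff_variance_zero_general
    {M : Type*} [MeasurableSpace M] (m : Measure M)
    (F : M ≃ᵐ M) (hF : MeasurePreserving F m m)
    (A : M → ℝ) (hA : MemLp A 2 m)
    (ρ : ℕ → ℝ) (hρ : ∀ n, ρ n = ∫ x, A x * A ((⇑F)^[n] x) ∂m)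
    (hsum : Summable fun n : ℕ => (n : ℝ) * |ρ n|) :
    (∃ C : ℝ, ∀ N : ℕ,
        (eLpNorm (fun x => ∑ n ∈ Finset.range N, A ((⇑F)^[n] x)) 2 m).toReal ≤ C)
      ↔ ρ 0 + 2 * ∑' n : ℕ, ρ (n + 1) = 0 := by
  have hcorr : autocorrelation m F A = ρ := funext fun n => (hρ n).symm
  have hr : Summable fun k : ℕ => ((k : ℝ) + 1) * |ρ (k + 1)| := by
    simpa using (summable_nat_add_iff 1).mpr hsum
  have hclose (N : ℕ) : |∫ x, birkhoffSum F A N x ^ 2 ∂m - N * (ρ 0 + 2 * ∑' n : ℕ, ρ (n + 1))|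
      ≤ 2 * ∑' k : ℕ, ((k : ℝ) + 1) * |ρ (k + 1)| := by
    have := abs_le.mp (abs_mul_tsum_sub_sum_range_le hr N)
    rw [hF.integral_birkhoffSum_sq hA N, hcorr, abs_le]
    constructor <;> linarith
  have hnorm (N : ℕ) : (eLpNorm (birkhoffSum F A N) 2 m).toReal
      = √(∫ x, birkhoffSum F A N x ^ 2 ∂m) :=
    MemLp.toReal_eLpNorm_two_eq_sqrt (f := birkhoffSum F A N)
      (memLp_finsetSum _ fun n _ => hA.comp_measurePreserving (hF.iterate n))
  show (∃ C : ℝ, ∀ N, (eLpNorm (birkhoffSum F A N) 2 m).toReal ≤ C) ↔ _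
  simp only [hnorm, Real.exists_forall_sqrt_le_iff]
  exact exists_forall_le_iff_eq_zero_of_abs_sub_nat_mul_le
    (fun N => integral_nonneg fun x => sq_nonneg _) hclose

/-- Gottschalk–Hedlund / Green–Kubo criterion.  Let `F` be an automorphism of
a probability space `(M, m)` and `A` a square-integrable observable of zero mean whose
correlations `ρ n = ∫ A · (A ∘ F^n) dm` satisfy `Σ_{n ≥ 0} n |ρ n| < ∞`.  Then the `L²` norms of
the Birkhoff sums `Σ_{n<N} A ∘ F^n` are bounded in `N` if and only if
`Σ² = Σ_{n=-∞}^{∞} ρ_n = ρ 0 + 2 Σ_{n ≥ 1} ρ n` vanishes (using `ρ_{-n} = ρ_n`). -/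
theorem bounded_birkhoff_L2_iff_variance_zero
    {M : Type*} [MeasurableSpace M] (m : Measure M) [IsProbabilityMeasure m]
    (F : M ≃ᵐ M) (hF : MeasurePreserving F m m)
    (A : M → ℝ) (hA : MemLp A 2 m) (hAmean : ∫ x, A x ∂m = 0)
    (ρ : ℕ → ℝ) (hρ : ∀ n, ρ n = ∫ x, A x * A ((⇑F)^[n] x) ∂m)
    (hsum : Summable fun n : ℕ => (n : ℝ) * |ρ n|) :
    (∃ C : ℝ, ∀ N : ℕ,
        (eLpNorm (fun x => ∑ n ∈ Finset.range N, A ((⇑F)^[n] x)) 2 m).toReal ≤ C)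
      ↔ ρ 0 + 2 * ∑' n : ℕ, ρ (n + 1) = 0 :=
  bounded_birkhoff_L2_iff_variance_zero_general m F hF A hA ρ hρ hsum
end

section
/- Let α ∈ 𝔻(κ) be a Diophantine vector in 𝕋^m, i.e. there is D > 0 with |⟨k, α⟩| ≥ D|k|^{-κ} (distance to nearest integer) for all nonzero k ∈ ℤ^m, and let 0 < r < κ. Then there is a constant C such that for every zero-mean φ in the Sobolev space H^r(𝕋^m) and every N ≥ 1, the Birkhoff sum φ_N(x) = Σ_{n=0}^{N-1} φ(x + nα) satisfies ‖φ_N‖_{L²} ≤ C · ‖φ‖_{H^r} · N^{1 - r/κ}. -/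
/-!
Write `A_N(θ) = ∑_{n<N} e^{2πinθ}`. Trivially `|A_N(θ)| ≤ N`, and summing the geometric series
gives `|A_N(θ)| ≤ 1 / (2‖θ‖)`, since `|e^{2πiθ} - 1| = 2|sin πθ| ≥ 4‖θ‖` by Jordan's inequality.
Interpolating, `|A_N(θ)| ≤ N^{1-t} (2‖θ‖)^{-t}` with `t = r/κ`, and the Diophantine condition
`‖⟨k,α⟩‖ ≥ D|k|^{-κ}` turns this into `|A_N(⟨k,α⟩)| ≤ (2D)^{-t} |k|^r N^{1-t}`. Squaring and summing
against `|a_k|²` gives the bound with `C = (2D)^{-r/κ}`.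
-/

open Complex Real

noncomputable def expSum (N : ℕ) (θ : ℝ) : ℂ :=
  ∑ n ∈ Finset.range N, Complex.exp (2 * π * Complex.I * n * θ)

lemma four_mul_abs_sub_round_le_norm_exp_sub_one (θ : ℝ) :
    4 * |θ - round θ| ≤ ‖Complex.exp (2 * π * Complex.I * θ) - 1‖ := by
  set x := θ - round θ
  have hx : |π * x| ≤ π / 2 := by
    rw [abs_mul, abs_of_pos pi_pos]
    nlinarith [abs_sub_round θ, pi_pos]
  have hperiod : Complex.exp (2 * π * Complex.I * θ) = Complex.exp (Complex.I * ↑(2 * π * x)) := by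
    rw [← mul_one (Complex.exp (Complex.I * _)), ← Complex.exp_int_mul_two_pi_mul_I (round θ),
      ← Complex.exp_add]
    push_cast [x]
    ring_nf
  rw [hperiod, Complex.norm_exp_I_mul_ofReal_sub_one, Real.norm_eq_abs, abs_mul, abs_two,
    show 2 * π * x / 2 = π * x by ring]
  calc 4 * |x| = 2 * (2 / π * |π * x|) := by
        rw [abs_mul, abs_of_pos pi_pos]; field_simp; ring
    _ ≤ 2 * |Real.sin (π * x)| := by gcongr; exact Real.mul_abs_le_abs_sin hx

lemma norm_geom_sum_le_of_norm_eq_one {𝕜 : Type*} [NormedDivisionRing 𝕜] {z : 𝕜}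
    (hz : ‖z‖ = 1) (hz1 : z ≠ 1) (N : ℕ) :
    ‖∑ n ∈ Finset.range N, z ^ n‖ ≤ 2 / ‖z - 1‖ := by
  rw [geom_sum_eq hz1, norm_div]
  gcongr
  calc ‖z ^ N - 1‖ ≤ ‖z ^ N‖ + ‖(1 : 𝕜)‖ := norm_sub_le _ _
    _ = 2 := by rw [norm_pow, hz, one_pow, norm_one]; norm_num

lemma norm_expSum_le_card (N : ℕ) (θ : ℝ) : ‖expSum N θ‖ ≤ N := by
  refine (norm_sum_le _ _).trans_eq ?_
  simp [Complex.norm_exp]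

lemma norm_expSum_le_of_le_abs_sub_round {θ δ : ℝ} (hδ : 0 < δ) (hθ : δ ≤ |θ - round θ|)
    (N : ℕ) : ‖expSum N θ‖ ≤ (2 * δ)⁻¹ := by
  set z := Complex.exp (2 * π * Complex.I * θ)
  have hz : ‖z‖ = 1 := by simp [z, Complex.norm_exp]
  have hz1 : 4 * δ ≤ ‖z - 1‖ :=
    (mul_le_mul_of_nonneg_left hθ (by norm_num)).trans
      (four_mul_abs_sub_round_le_norm_exp_sub_one θ)
  have hsum : expSum N θ = ∑ n ∈ Finset.range N, z ^ n := by
    refine Finset.sum_congr rfl fun n _ => ?_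
    rw [← Complex.exp_nat_mul]
    ring_nf
  calc ‖expSum N θ‖ ≤ 2 / ‖z - 1‖ := by
        rw [hsum]
        refine norm_geom_sum_le_of_norm_eq_one hz (fun h => ?_) N
        rw [h, sub_self, norm_zero] at hz1
        linarith
    _ ≤ 2 / (4 * δ) := by gcongr
    _ = (2 * δ)⁻¹ := by field_simp; norm_num

lemma min_le_rpow_mul_rpow {x y t : ℝ} (hx : 0 ≤ x) (hy : 0 ≤ y) (ht₀ : 0 ≤ t) (ht₁ : t ≤ 1) :
    min x y ≤ x ^ (1 - t) * y ^ t := by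
  have hmin : 0 ≤ min x y := le_min hx hy
  calc min x y = min x y ^ (1 - t) * min x y ^ t := by
        rw [← Real.rpow_add' hmin (by norm_num), sub_add_cancel, Real.rpow_one]
    _ ≤ x ^ (1 - t) * y ^ t := by
        gcongr <;> first | exact min_le_left _ _ | exact min_le_right _ _

lemma norm_expSum_le_of_diophantine {θ D K κ r : ℝ} (hD : 0 < D) (hK : 0 < K) (hκ : 0 < κ)
    (hr : 0 ≤ r) (hrκ : r ≤ κ) (hθ : D * K ^ (-κ) ≤ |θ - round θ|) (N : ℕ) :
    ‖expSum N θ‖ ≤ (2 * D) ^ (-(r / κ)) * K ^ r * (N : ℝ) ^ (1 - r / κ) := by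
  have hδ : 0 < D * K ^ (-κ) := by positivity
  calc ‖expSum N θ‖ ≤ min (N : ℝ) (2 * (D * K ^ (-κ)))⁻¹ :=
        le_min (norm_expSum_le_card N θ) (norm_expSum_le_of_le_abs_sub_round hδ hθ N)
    _ ≤ (N : ℝ) ^ (1 - r / κ) * ((2 * (D * K ^ (-κ)))⁻¹) ^ (r / κ) :=
        min_le_rpow_mul_rpow (Nat.cast_nonneg N) (by positivity) (by positivity)
          ((div_le_one hκ).2 hrκ)
    _ = (2 * D) ^ (-(r / κ)) * K ^ r * (N : ℝ) ^ (1 - r / κ) := by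
        rw [Real.inv_rpow (by positivity), ← Real.rpow_neg (by positivity), ← mul_assoc,
          Real.mul_rpow (by positivity) (by positivity), ← Real.rpow_mul hK.le,
          show -κ * -(r / κ) = r by field_simp]
        ring

lemma tsum_le_mul_tsum_of_le {ι : Type*} {f g : ι → ℝ} {c : ℝ} (hf : ∀ i, 0 ≤ f i)
    (hg : Summable g) (h : ∀ i, f i ≤ c * g i) : ∑' i, f i ≤ c * ∑' i, g i := by
  rw [← tsum_mul_left]
  exact Summable.tsum_le_tsum h (.of_nonneg_of_le hf h (hg.mul_left c)) (hg.mul_left c)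

theorem diophantine_birkhoff_sobolev_bound_general
    (m : ℕ) (κ r : ℝ) (hr : 0 < r) (hrκ : r < κ)
    (α : Fin m → ℝ) (D : ℝ) (hD : 0 < D)
    (hdioph : ∀ k : Fin m → ℤ, k ≠ 0 → ∀ p : ℤ,
      D * ‖(fun i => (k i : ℝ))‖ ^ (-κ) ≤ |(∑ i, (k i : ℝ) * α i) - p|) :
    ∃ C : ℝ, 0 < C ∧ ∀ (a : (Fin m → ℤ) → ℂ), a 0 = 0 →
      Summable (fun k : Fin m → ℤ => ‖(fun i => (k i : ℝ))‖ ^ (2 * r) * ‖a k‖ ^ 2) →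
      ∀ N : ℕ, 1 ≤ N →
        (∑' k : Fin m → ℤ, ‖a k‖ ^ 2 *
            ‖∑ n ∈ Finset.range N,
                Complex.exp (2 * π * Complex.I * n * (∑ i, (k i : ℝ) * α i))‖ ^ 2)
          ≤ C ^ 2 * (∑' k : Fin m → ℤ, ‖(fun i => (k i : ℝ))‖ ^ (2 * r) * ‖a k‖ ^ 2) *
              ((N : ℝ) ^ (1 - r / κ)) ^ 2 := by
  have hκ : 0 < κ := hr.trans hrκ
  refine ⟨(2 * D) ^ (-(r / κ)), by positivity, fun a ha0 hsum N _ => ?_⟩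
  refine (tsum_le_mul_tsum_of_le (c := ((2 * D) ^ (-(r / κ))) ^ 2 * ((N : ℝ) ^ (1 - r / κ)) ^ 2)
    (fun k => by positivity) hsum fun k => ?_).trans_eq (mul_right_comm _ _ _)
  obtain rfl | hk := eq_or_ne k 0
  · simp [ha0]
  have hK : 0 < ‖(fun i => (k i : ℝ))‖ :=
    norm_pos_iff.2 fun h => hk (funext fun i => by simpa using congrFun h i)
  have hA := norm_expSum_le_of_diophantine hD hK hκ hr.le hrκ.le (hdioph k hk _) N
  calc _ ≤ ‖a k‖ ^ 2 * ((2 * D) ^ (-(r / κ)) * ‖(fun i => (k i : ℝ))‖ ^ r *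
          (N : ℝ) ^ (1 - r / κ)) ^ 2 := by gcongr; exact hA
    _ = _ := by rw [mul_comm 2 r, Real.rpow_mul hK.le, Real.rpow_two]; ring

/-- Let `α ∈ 𝔻(κ)` be a Diophantine vector in `𝕋^m` (so
`dist(⟨k,α⟩, ℤ) ≥ D |k|^{-κ}` for every nonzero `k ∈ ℤ^m`), and let `0 < r < κ`.  Then there is
a constant `C` such that for every zero-mean `φ ∈ H^r(𝕋^m)`, described through its Fourier
coefficients `a : ℤ^m → ℂ` with `a 0 = 0` (so that `‖φ‖²_{H^r} = Σ |k|^{2r} |a_k|²` and, by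
Parseval, `‖φ_N‖²_{L²} = Σ_k |a_k|² |A_k(N)|²` where `A_k(N) = Σ_{n<N} e^{2πi n ⟨k,α⟩}`), one
has `‖φ_N‖_{L²} ≤ C ‖φ‖_{H^r} N^{1 - r/κ}` for all `N ≥ 1`. -/
theorem diophantine_birkhoff_sobolev_bound
    (m : ℕ) (hm : 1 ≤ m) (κ r : ℝ) (hr : 0 < r) (hrκ : r < κ)
    (α : Fin m → ℝ) (D : ℝ) (hD : 0 < D)
    (hdioph : ∀ k : Fin m → ℤ, k ≠ 0 → ∀ p : ℤ,
      D * ‖(fun i => (k i : ℝ))‖ ^ (-κ) ≤ |(∑ i, (k i : ℝ) * α i) - p|) :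
    ∃ C : ℝ, 0 < C ∧ ∀ (a : (Fin m → ℤ) → ℂ), a 0 = 0 →
      Summable (fun k : Fin m → ℤ => ‖(fun i => (k i : ℝ))‖ ^ (2 * r) * ‖a k‖ ^ 2) →
      ∀ N : ℕ, 1 ≤ N →
        (∑' k : Fin m → ℤ, ‖a k‖ ^ 2 *
            ‖∑ n ∈ Finset.range N,
                Complex.exp (2 * π * Complex.I * n * (∑ i, (k i : ℝ) * α i))‖ ^ 2)
          ≤ C ^ 2 * (∑' k : Fin m → ℤ, ‖(fun i => (k i : ℝ))‖ ^ (2 * r) * ‖a k‖ ^ 2) *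
              ((N : ℝ) ^ (1 - r / κ)) ^ 2 :=
  diophantine_birkhoff_sobolev_bound_general m κ r hr hrκ α D hD hdioph
end

section
/- Let (Ω, μ, f) be a probability-preserving system, τ : Ω → ℝ^d, and suppose there is ε > 0 such that for every K > 0, the sets X_{K,N} := {x : #{n : |n| < N, ‖τ_n(x)‖ ≤ K log N} ≥ N^{1/4 - ε}} satisfy N μ(X_{K,N}) → 0. Let 𝔪_N(x) = N^{-1/2} Σ_{n=0}^{N-1} δ_{τ_n(x)}. Then there exist sets X̂_N ⊂ Ω with μ(X̂_N) → 1 such that for every r ≥ 3, every K > 0, and every choice x_N ∈ X̂_N: ∫ 𝔪_N(x_N)^{r-1}(B(t, K log N)) d𝔪_N(x_N)(t) → 0 as N → ∞. -/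
/-!
Since `τ_j x - τ_n x = τ_{j-n}(f^n x)` with `|j - n| < N`, a point `x` whose first `N` iterates
avoid `X_{K,N}` has, around each `τ_n x` with `n < N`, fewer than `N^{1/4-ε}` of the `τ_j x`
within distance `K log N`. The sum of `(r-1)`-st powers is then at most `N^{1 + (1/4-ε)(r-1)}`,
which is `o(N^{r/2})` once `r ≥ 3`. Invariance of `μ` gives `μ(X̂_N(K)ᶜ) ≤ N μ(X_{K,N})`, and a
diagonal argument lets `K = K_N → ∞` slowly enough that this still tends to `0`; every fixed `K`
is eventually below `K_N`.
-/

open MeasureTheory Filter Finset Topology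
open scoped Classical

theorem exists_tendsto_atTop_diagonal {α : Type*} [PseudoMetricSpace α] {u : ℕ → ℕ → α} {a : α}
    (hu : ∀ k, Tendsto (u k) atTop (𝓝 a)) :
    ∃ g : ℕ → ℕ, Tendsto g atTop atTop ∧ Tendsto (fun N => u (g N) N) atTop (𝓝 a) := by
  let P : ℕ → ℕ → Prop := fun N k => dist (u k N) a ≤ 1 / ((k : ℝ) + 1)
  have hP : ∀ k, ∀ᶠ N in atTop, k ≤ N ∧ P N k := fun k =>
    (eventually_ge_atTop k).and ((hu k).eventually (Metric.closedBall_mem_nhds a (by positivity)))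
  set g : ℕ → ℕ := fun N => Nat.findGreatest (P N) N
  have hg : Tendsto g atTop atTop :=
    tendsto_atTop.2 fun k => (hP k).mono fun N hN => Nat.le_findGreatest hN.1 hN.2
  refine ⟨g, hg, tendsto_iff_dist_tendsto_zero.2 <|
    squeeze_zero' (Eventually.of_forall fun N => dist_nonneg) ?_
      (tendsto_one_div_add_atTop_nhds_zero_nat.comp hg)⟩
  exact (hP 0).mono fun N hN => Nat.findGreatest_spec hN.1 hN.2

theorem tendsto_measure_toReal_one_of_compl {α ι : Type*} [MeasurableSpace α] {μ : Measure α}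
    [IsProbabilityMeasure μ] {l : Filter ι} {s : ι → Set α}
    (h : Tendsto (fun i => (μ (s i)ᶜ).toReal) l (𝓝 0)) :
    Tendsto (fun i => (μ (s i)).toReal) l (𝓝 1) := by
  have hlower : ∀ i, 1 - (μ (s i)ᶜ).toReal ≤ (μ (s i)).toReal := fun i => by
    have := ENNReal.toReal_mono (by finiteness) (measure_univ_le_add_compl (μ := μ) (s i))
    rw [ENNReal.toReal_add (by finiteness) (by finiteness), measure_univ,
      ENNReal.toReal_one] at this
    linarith
  refine tendsto_of_tendsto_of_tendsto_of_le_of_le ?_ tendsto_const_nhds hlower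
    fun i => measureReal_le_one
  simpa using (tendsto_const_nhds (x := (1 : ℝ))).sub h

section Iterate

variable {α : Type*} [MeasurableSpace α] {μ : Measure α} {f : α → α}

-- With `s = X_{K,N}` this is the paper's `X̂_N(K)`.
def avoidingSet (f : α → α) (s : Set α) (N : ℕ) : Set α := {x | ∀ n < N, f^[n] x ∉ s}

theorem MeasureTheory.MeasurePreserving.measure_preimage_iterate (hf : MeasurePreserving f μ μ)
    (hfe : MeasurableEmbedding f) (n : ℕ) (s : Set α) : μ (f^[n] ⁻¹' s) = μ s := by
  induction n with
  | zero => rfl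
  | succ n ih =>
    rw [Function.iterate_succ, Set.preimage_comp, hf.measure_preimage_emb hfe, ih]

theorem measure_compl_avoidingSet_le (hf : MeasurePreserving f μ μ) (hfe : MeasurableEmbedding f)
    (s : Set α) (N : ℕ) : μ (avoidingSet f s N)ᶜ ≤ N * μ s := by
  have hcompl : (avoidingSet f s N)ᶜ = ⋃ n ∈ range N, f^[n] ⁻¹' s := by
    ext x; simp [avoidingSet]
  calc μ (avoidingSet f s N)ᶜ ≤ ∑ n ∈ range N, μ (f^[n] ⁻¹' s) :=
        hcompl ▸ measure_biUnion_finset_le _ _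
    _ = N * μ s := by simp [hf.measure_preimage_iterate hfe]

end Iterate

theorem cocycle_sub_of_eq_birkhoffSum {α G : Type*} [AddCommGroup G] {f g : α → α} {τ : α → G}
    {T : ℤ → α → G} (hgf : Function.LeftInverse g f)
    (hTpos : ∀ (n : ℕ) x, T n x = birkhoffSum f τ n x)
    (hTneg : ∀ (n : ℕ) x, T (-(n : ℤ)) x = -T n (g^[n] x)) (j n : ℕ) (x : α) :
    T ((j : ℤ) - n) (f^[n] x) = T j x - T n x := by
  rcases le_total n j with h | h
  · obtain ⟨m, rfl⟩ := Nat.exists_eq_add_of_le h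
    rw [show ((n + m : ℕ) : ℤ) - n = m by push_cast; ring]
    simp only [hTpos, birkhoffSum_add]
    abel
  · obtain ⟨m, rfl⟩ := Nat.exists_eq_add_of_le h
    have hback : g^[m] (f^[j + m] x) = f^[j] x := by
      rw [add_comm, Function.iterate_add_apply, hgf.iterate m]
    rw [show (j : ℤ) - (j + m : ℕ) = -(m : ℤ) by push_cast; ring, hTneg, hback]
    simp only [hTpos, birkhoffSum_add]
    abel

section Returns

variable {α G : Type*} [SeminormedAddCommGroup G]

-- The paper's `X_{K,N}`, with `ε` made explicit.
def frequentReturnSet (T : ℤ → α → G) (ε K : ℝ) (N : ℕ) : Set α :=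
  {x | (N : ℝ) ^ ((1 : ℝ) / 4 - ε) ≤
    (((Icc (-(N : ℤ)) N).filter fun n : ℤ => |(n : ℝ)| < N ∧ ‖T n x‖ ≤ K * Real.log N).card : ℝ)}

theorem card_filter_norm_sub_le_of_shift {T : ℤ → α → G} {x y : α} {N n : ℕ} (hn : n < N)
    {s : Finset ℤ} (hs : ∀ j ∈ s, 0 ≤ j ∧ j < N)
    (hshift : ∀ j : ℕ, T ((j : ℤ) - n) y = T j x - T n x) {R R' : ℝ} (hR : R ≤ R') :
    (s.filter fun j => ‖T j x - T n x‖ ≤ R).card ≤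
      ((Icc (-(N : ℤ)) N).filter fun m : ℤ => |(m : ℝ)| < N ∧ ‖T m y‖ ≤ R').card := by
  refine card_le_card_of_injOn (· - (n : ℤ)) (fun j hj => ?_)
    (fun a _ b _ hab => sub_left_injective hab)
  obtain ⟨hjs, hjR⟩ := mem_filter.1 hj
  obtain ⟨hj0, hjN⟩ := hs j hjs
  lift j to ℕ using hj0
  have habs : |((j : ℤ) - n : ℤ)| < N := abs_lt.2 ⟨by omega, by omega⟩
  simp only [coe_filter, Set.mem_ofPred_eq, mem_Icc]
  refine ⟨⟨by omega, by omega⟩, by exact_mod_cast habs, ?_⟩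
  rw [hshift]
  exact hjR.trans hR

theorem sum_pow_card_filter_le_of_mem_avoidingSet {f : α → α} {T : ℤ → α → G}
    (hshift : ∀ (j n : ℕ) x, T ((j : ℤ) - n) (f^[n] x) = T j x - T n x) {ε K K' : ℝ}
    (hK : K ≤ K') {N : ℕ} {x : α} (hx : x ∈ avoidingSet f (frequentReturnSet T ε K' N) N)
    {s : Finset ℤ} (hs : ∀ j ∈ s, 0 ≤ j ∧ j < N) (p : ℕ) :
    ∑ n ∈ range N, ((s.filter fun j => ‖T j x - T n x‖ ≤ K * Real.log N).card : ℝ) ^ p ≤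
      N * ((N : ℝ) ^ ((1 : ℝ) / 4 - ε)) ^ p := by
  have hterm : ∀ n ∈ range N,
      ((s.filter fun j => ‖T j x - T n x‖ ≤ K * Real.log N).card : ℝ) ≤
        (N : ℝ) ^ ((1 : ℝ) / 4 - ε) := fun n hn => by
    have hn := mem_range.1 hn
    have hcard := card_filter_norm_sub_le_of_shift hn hs (hshift · n x)
      (mul_le_mul_of_nonneg_right hK (Real.log_natCast_nonneg N))
    exact (Nat.cast_le.2 hcard).trans (not_le.1 (hx n hn)).le
  calc _ ≤ ∑ _n ∈ range N, ((N : ℝ) ^ ((1 : ℝ) / 4 - ε)) ^ p :=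
        sum_le_sum fun n hn => pow_le_pow_left₀ (Nat.cast_nonneg _) (hterm n hn) p
    _ = _ := by rw [sum_const, card_range, nsmul_eq_mul]

end Returns

theorem tendsto_rpow_neg_half_mul_rpow_pow {ε : ℝ} (hε : 0 < ε) {r : ℕ} (hr : 3 ≤ r) :
    Tendsto (fun N : ℕ => (N : ℝ) ^ (-(r : ℝ) / 2) * (N * ((N : ℝ) ^ ((1 : ℝ) / 4 - ε)) ^ (r - 1)))
      atTop (𝓝 0) := by
  set e : ℝ := -(r : ℝ) / 2 + (1 + ((1 : ℝ) / 4 - ε) * ((r : ℝ) - 1))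
  have he : e < 0 := by
    have : (3 : ℝ) ≤ r := by exact_mod_cast hr
    simp only [e]
    nlinarith
  have hpow : Tendsto (fun N : ℕ => (N : ℝ) ^ e) atTop (𝓝 0) := by
    simpa [Function.comp_def] using
      (tendsto_rpow_neg_atTop (neg_pos.2 he)).comp tendsto_natCast_atTop_atTop
  refine hpow.congr' ((eventually_gt_atTop 0).mono fun N hN => ?_)
  have hN : (0 : ℝ) < N := by exact_mod_cast hN
  dsimp only
  symm
  simp only [e, Real.rpow_add hN, Real.rpow_one]
  rw [← Real.rpow_natCast, ← Real.rpow_mul hN.le, Nat.cast_sub (by omega), Nat.cast_one]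

/-- property (b) of the CLT criterion for the random measures `𝔪_N`.
Assume there is `ε > 0` such that for every `K > 0` the sets
`X_{K,N} = {x : #{n : |n| < N, ‖τ_n(x)‖ ≤ K log N} ≥ N^{1/4-ε}}` satisfy `N μ(X_{K,N}) → 0`.
Then there are sets `X̂_N` with `μ(X̂_N) → 1` such that for every `r ≥ 3`, every `K > 0` and
every choice `x_N ∈ X̂_N`,
`∫ 𝔪_N(x_N)^{r-1}(B(t, K log N)) d𝔪_N(x_N)(t)
  = N^{-r/2} Σ_{n<N} (#{j<N : ‖τ_j(x_N) - τ_n(x_N)‖ ≤ K log N})^{r-1} → 0`. -/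
theorem random_measures_property_b
    {Ω : Type*} [MeasurableSpace Ω] {d : ℕ}
    (μ : Measure Ω) [IsProbabilityMeasure μ]
    (f : Ω ≃ᵐ Ω) (hf : MeasurePreserving f μ μ)
    (τ : Ω → EuclideanSpace ℝ (Fin d))
    (T : ℤ → Ω → EuclideanSpace ℝ (Fin d))
    (hTpos : ∀ (n : ℕ) (x : Ω), T n x = ∑ j ∈ Finset.range n, τ ((⇑f)^[j] x))
    (hTneg : ∀ (n : ℕ) (x : Ω), T (-(n : ℤ)) x = -(T n ((⇑f.symm)^[n] x)))
    (ε : ℝ) (hε : 0 < ε)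
    (hXKN : ∀ K : ℝ, 0 < K →
      Tendsto (fun N : ℕ => (N : ℝ) *
        (μ {x | (N : ℝ) ^ ((1:ℝ)/4 - ε) ≤
          (((Finset.Icc (-(N : ℤ)) (N : ℤ)).filter
            (fun n : ℤ => |(n : ℝ)| < (N : ℝ) ∧ ‖T n x‖ ≤ K * Real.log N)).card : ℝ)}).toReal)
        atTop (nhds 0)) :
    ∃ Xhat : ℕ → Set Ω,
      Tendsto (fun N => (μ (Xhat N)).toReal) atTop (nhds 1) ∧
      ∀ r : ℕ, 3 ≤ r → ∀ K : ℝ, 0 < K → ∀ x : ℕ → Ω, (∀ N, x N ∈ Xhat N) →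
        Tendsto (fun N : ℕ => (N : ℝ) ^ (-(r : ℝ) / 2) *
          ∑ n ∈ Finset.range N,
            ((((Finset.range N).filter
              (fun j => ‖T j (x N) - T n (x N)‖ ≤ K * Real.log N)).card : ℝ)) ^ (r - 1))
          atTop (nhds 0) := by
  have hshift := cocycle_sub_of_eq_birkhoffSum f.symm_apply_apply hTpos hTneg
  obtain ⟨g, hg, hgμ⟩ := exists_tendsto_atTop_diagonal
    (u := fun k N => (N : ℝ) * (μ (frequentReturnSet T ε ((k : ℝ) + 1) N)).toReal)
    fun k => hXKN _ k.cast_add_one_pos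
  refine ⟨fun N => avoidingSet f (frequentReturnSet T ε ((g N : ℝ) + 1) N) N,
    tendsto_measure_toReal_one_of_compl ?_, ?_⟩
  · refine squeeze_zero (fun _ => ENNReal.toReal_nonneg) (fun N => ?_) hgμ
    calc _ ≤ ((N : ENNReal) * μ (frequentReturnSet T ε ((g N : ℝ) + 1) N)).toReal :=
          ENNReal.toReal_mono (by finiteness)
            (measure_compl_avoidingSet_le hf f.measurableEmbedding _ N)
      _ = _ := by rw [ENNReal.toReal_mul, ENNReal.toReal_natCast]
  · intro r hr K _ x hx
    refine squeeze_zero' (Eventually.of_forall fun N =>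
      mul_nonneg (by positivity) (sum_nonneg fun _ _ => by positivity)) ?_
      (tendsto_rpow_neg_half_mul_rpow_pow hε hr)
    filter_upwards [hg.eventually_ge_atTop ⌈K⌉₊] with N hN
    have hK : K ≤ (g N : ℝ) + 1 :=
      (Nat.le_ceil K).trans (by exact_mod_cast hN.trans (Nat.le_succ _))
    refine mul_le_mul_of_nonneg_left
      (sum_pow_card_filter_le_of_mem_avoidingSet hshift hK (hx N) (fun j hj => ?_) _)
      (by positivity)
    -- The statement's `j` ranges over `range N` pushed into `ℤ` through the `Finset` monad.
    simp only [pure_def, Finset.bind_def, sup_singleton_apply, mem_image, mem_range] at hj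
    omega
end

section
/- Let H be a Lie group with right-invariant metric d_H, Γ ≤ H a discrete subgroup with systole bound c := inf_{y∈H} inf_{γ≠e} d_H(y, yγ) > c₀ > 0. Suppose {a_j} ⊂ A is a sequence of group elements acting on H with sup-Lipschitz constant C on unit scale (i.e. d_H(by, by') ≤ C d_H(y,y') whenever d_H(y,y') ≤ 1 and b = a_{j+1} - a_j type increments), and suppose that for lifts y, y' ∈ H with y' ∉ H^c(y) there exists j₀ with d_H(a_{j₀}y, a_{j₀}y') > η̄ for some η̄ > 0. Then for 0 < η < η̄ with c ≥ (C + 1/4)η, and for points in Y = H/Γ at distance ≤ η/4 with y' ∉ W^c(y), there exists j with d_Y(a_j y, a_j y') ≥ η/4. -/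
/-!
Let `k + 1` be the first time at which the lifts are more than `η/4` apart. At time `k` they are
still `η/4`-close, so one Lipschitz step keeps them within `Cη/4`, which is far below the systole
`c`. Hence a nontrivial `γ ∈ Γ` moves `a_{k+1} y'` by at least `c`, further than the
`c - η/4` that would be needed to bring it within `η/4` of `a_{k+1} y`; and `γ = 1` gives
distance `> η/4` by the choice of `k`.
-/

theorem Nat.exists_le_and_lt_succ_of_exists_lt {α : Type*} [LinearOrder α] {u : ℕ → α} {r : α}
    (h0 : u 0 ≤ r) (hex : ∃ j, r < u j) : ∃ k, u k ≤ r ∧ r < u (k + 1) := by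
  classical
  have hpos : Nat.find hex ≠ 0 := fun h => (Nat.find_spec hex).not_ge (h ▸ h0)
  obtain ⟨k, hk⟩ := Nat.exists_eq_succ_of_ne_zero hpos
  have hexit := Nat.find_spec hex
  rw [hk] at hexit
  exact ⟨k, not_lt.mp (Nat.find_min hex (by omega)), hexit⟩

theorem le_dist_mul_of_dist_add_le_systole {H : Type*} [Group H] [PseudoMetricSpace H]
    {Γ : Subgroup H} {c r : ℝ} {x x' : H}
    (hsys : ∀ γ ∈ Γ, γ ≠ 1 → c ≤ dist x' (x' * γ))
    (hr : r ≤ dist x x') (hc : dist x x' + r ≤ c) :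
    ∀ γ ∈ Γ, r ≤ dist x (x' * γ) := by
  intro γ hγ
  rcases eq_or_ne γ 1 with rfl | hγ1
  · simpa using hr
  · have := dist_triangle_left x' (x' * γ) x
    linarith [hsys γ hγ hγ1]

theorem quotient_separation_general
    {H : Type*} [Group H] [MetricSpace H]
    (Γ : Subgroup H) (c : ℝ)
    (hsystole : ∀ y : H, ∀ γ ∈ Γ, γ ≠ 1 → c ≤ dist y (y * γ))
    (a : ℕ → H → H) (ha0 : ∀ y, a 0 y = y)
    (C : ℝ) (hC : 1 ≤ C)
    (hlip : ∀ j (y y' : H), dist (a j y) (a j y') ≤ 1 →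
      dist (a (j + 1) y) (a (j + 1) y') ≤ C * dist (a j y) (a j y'))
    (ηbar η : ℝ) (hη0 : 0 < η) (hηηbar : η < ηbar) (hη1 : η ≤ 1) (hcη : (C + 1/4) * η ≤ c)
    (y y' : H) (hclose : dist y y' ≤ η / 4)
    (hsep : ∃ j₀, ηbar < dist (a j₀ y) (a j₀ y')) :
    ∃ j, ∀ γ ∈ Γ, η / 4 ≤ dist (a j y) (a j y' * γ) := by
  set u : ℕ → ℝ := fun j => dist (a j y) (a j y')
  have hu0 : u 0 ≤ η / 4 := by simpa [u, ha0] using hclose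
  have hexit : ∃ j, η / 4 < u j := by
    obtain ⟨j₀, hj₀⟩ := hsep
    exact ⟨j₀, by linarith⟩
  obtain ⟨k, hk, hk1⟩ := Nat.exists_le_and_lt_succ_of_exists_lt hu0 hexit
  have hstep : u (k + 1) ≤ C * (η / 4) :=
    (hlip k y y' (by linarith)).trans (mul_le_mul_of_nonneg_left hk (by linarith))
  refine ⟨k + 1, le_dist_mul_of_dist_add_le_systole (hsystole _) hk1.le ?_⟩
  nlinarith

/-- separation in the quotient `Y = H/Γ`.  Let `H` be a group with a
(right-invariant) metric, `Γ ≤ H` a discrete subgroup with systole `≥ c > 0`, and let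
`a_j : H → H` be a sequence of maps (with `a_0 = id`) commuting with the right `Γ`-action,
whose one-step increments are `C`-Lipschitz at unit scale.  Suppose that on lifts the points
eventually separate: `∃ j₀, d_H(a_{j₀} y, a_{j₀} y') > ηbar`.  Then for `0 < η < ηbar` with
`c ≥ (C + 1/4) η`, whenever `d_H(y, y') ≤ η/4` there exists `j` with
`d_Y(a_j y, a_j y') ≥ η/4`, i.e. `d_H(a_j y, (a_j y')·γ) ≥ η/4` for every `γ ∈ Γ`. -/
theorem quotient_separation
    {H : Type*} [Group H] [MetricSpace H]
    (Γ : Subgroup H) (c : ℝ) (hc : 0 < c)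
    (hsystole : ∀ y : H, ∀ γ ∈ Γ, γ ≠ 1 → c ≤ dist y (y * γ))
    (a : ℕ → H → H) (ha0 : ∀ y, a 0 y = y)
    (hequiv : ∀ j (y : H), ∀ γ ∈ Γ, a j (y * γ) = a j y * γ)
    (C : ℝ) (hC : 1 ≤ C)
    (hlip : ∀ j (y y' : H), dist (a j y) (a j y') ≤ 1 →
      dist (a (j + 1) y) (a (j + 1) y') ≤ C * dist (a j y) (a j y'))
    (ηbar η : ℝ) (hη0 : 0 < η) (hηηbar : η < ηbar) (hη1 : η ≤ 1) (hcη : (C + 1/4) * η ≤ c)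
    (y y' : H) (hclose : dist y y' ≤ η / 4)
    (hsep : ∃ j₀, ηbar < dist (a j₀ y) (a j₀ y')) :
    ∃ j, ∀ γ ∈ Γ, η / 4 ≤ dist (a j y) (a j y' * γ) :=
  quotient_separation_general Γ c hsystole a ha0 C hC hlip ηbar η hη0 hηηbar hη1 hcη y y' hclose
    hsep
end
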